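/- Let n > 0 be a real number and let u be a positive C² function on [−1,1] with u'(±1) = 0. With L f = (1−z²)f'' − nzf' and dν_n = Z_n^{-1}(1−z²)^{(n−2)/2}dz, one has ∫ (L u) (|u'|²/u)(1−z²) dν_n = (n/(n+2)) ∫ (|u'|⁴/u²)(1−z²)² dν_n − 2(n−1)/(n+2) ∫ (|u'|² u''/u)(1−z²)² dν_n. -/

import Mathlib

/-!
The density $(1-z^2)^{(n-2)/2}$ turns the three $\nu_n$-integrals into integrals over $[-1,1]$
against $(1-z^2)^{n/2}$ and $(1-z^2)^{n/2+1}$. Differentiating $(1-z^2)^{n/2+1}\,u'^3/u$, which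
vanishes at $\pm 1$, gives
$3\int (1-z^2)^{n/2+1} u'^2u''/u - \int (1-z^2)^{n/2+1} u'^4/u^2 = (n+2)\int z(1-z^2)^{n/2} u'^3/u$,
and substituting this into the drift term $-nzu'$ of $Lu$ yields the identity.
-/

open MeasureTheory Real Set intervalIntegral

theorem integral_withDensity_ofReal_restrict_Icc {a b : ℝ} (hab : a ≤ b) {ρ : ℝ → ℝ}
    (hρm : Measurable ρ) (hρ : ∀ z ∈ Icc a b, 0 ≤ ρ z) (g : ℝ → ℝ) :
    ∫ z, g z ∂(volume.restrict (Icc a b)).withDensity (fun z => ENNReal.ofReal (ρ z)) =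
      ∫ z in a..b, ρ z * g z := by
  rw [integral_withDensity_eq_integral_toReal_smul (f := fun z => ENNReal.ofReal (ρ z))
      (by fun_prop) (.of_forall fun _ => ENNReal.ofReal_lt_top),
    setIntegral_congr_fun measurableSet_Icc fun z hz => by
      rw [ENNReal.toReal_ofReal (hρ z hz), smul_eq_mul],
    integral_Icc_eq_integral_Ioc, integral_of_le hab]

theorem continuous_one_sub_sq_rpow {s : ℝ} (hs : 0 ≤ s) :
    Continuous fun x : ℝ => (1 - x ^ 2) ^ s := by
  fun_prop (disch := exact Or.inr hs)

theorem hasDerivAt_one_sub_sq_rpow {s x : ℝ} (hx : x ∈ Ioo (-1 : ℝ) 1) :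
    HasDerivAt (fun z => (1 - z ^ 2) ^ (s + 1)) (-(2 * (s + 1)) * x * (1 - x ^ 2) ^ s) x := by
  have hx₁ : 0 < 1 - x ^ 2 := by nlinarith [hx.1, hx.2]
  convert ((hasDerivAt_pow 2 x).const_sub 1).rpow_const (p := s + 1) (Or.inl hx₁.ne') using 1
  rw [add_sub_cancel_right]
  push_cast
  ring

theorem integral_one_sub_sq_rpow_mul_deriv {s : ℝ} (hs : 0 ≤ s) {f f' : ℝ → ℝ}
    (hf : ContinuousOn f (Icc (-1) 1)) (hf' : ContinuousOn f' (Icc (-1) 1))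
    (hderiv : ∀ x ∈ Ioo (-1 : ℝ) 1, HasDerivAt f (f' x) x) :
    ∫ x in (-1 : ℝ)..1, (1 - x ^ 2) ^ (s + 1) * f' x =
      2 * (s + 1) * ∫ x in (-1 : ℝ)..1, x * (1 - x ^ 2) ^ s * f x := by
  have hs₁ : 0 ≤ s + 1 := by linarith
  have hint₁ : IntervalIntegrable (fun x => (1 - x ^ 2) ^ (s + 1) * f' x) volume (-1) 1 :=
    ((continuous_one_sub_sq_rpow hs₁).continuousOn.mul hf').intervalIntegrable_of_Icc
      (by norm_num)
  have hint₂ : IntervalIntegrable (fun x => x * (1 - x ^ 2) ^ s * f x) volume (-1) 1 :=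
    ((continuous_id.mul (continuous_one_sub_sq_rpow hs)).continuousOn.mul
      hf).intervalIntegrable_of_Icc (by norm_num)
  have hftc : ∫ x in (-1 : ℝ)..1,
      (-(2 * (s + 1)) * (x * (1 - x ^ 2) ^ s * f x) + (1 - x ^ 2) ^ (s + 1) * f' x) = 0 := by
    rw [integral_eq_sub_of_hasDerivAt_of_le (by norm_num)
      ((continuous_one_sub_sq_rpow hs₁).continuousOn.mul hf)
      (fun x hx => ((hasDerivAt_one_sub_sq_rpow hx).mul (hderiv x hx)).congr_deriv (by ring))
      ((hint₂.const_mul _).add hint₁)]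
    norm_num [zero_rpow (by linarith : s + 1 ≠ 0)]
  rw [integral_add (hint₂.const_mul _) hint₁, intervalIntegral.integral_const_mul] at hftc
  linarith

theorem HasDerivAt.pow_three_div {u a : ℝ → ℝ} {x b : ℝ} (hu : HasDerivAt u (a x) x)
    (ha : HasDerivAt a b x) (hx : u x ≠ 0) :
    HasDerivAt (fun z => a z ^ 3 / u z) (3 * (a x ^ 2 * b / u x) - a x ^ 4 / u x ^ 2) x :=
  ((ha.fun_pow 3).div hu hx).congr_deriv (by field_simp; ring)

theorem integral_one_sub_sq_rpow_mul_generator_mul_deriv_sq_div {n : ℝ} (hn : 0 < n)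
    {u : ℝ → ℝ} (hu : ContDiff ℝ 2 u) (hpos : ∀ z ∈ Icc (-1 : ℝ) 1, 0 < u z) :
    ∫ z in (-1 : ℝ)..1, (1 - z ^ 2) ^ (n / 2) *
        (((1 - z ^ 2) * deriv (deriv u) z - n * z * deriv u z) * (deriv u z ^ 2 / u z)) =
      n / (n + 2) *
          (∫ z in (-1 : ℝ)..1, (1 - z ^ 2) ^ (n / 2 + 1) * (deriv u z ^ 4 / u z ^ 2))
        - 2 * (n - 1) / (n + 2) *
          ∫ z in (-1 : ℝ)..1,
            (1 - z ^ 2) ^ (n / 2 + 1) * (deriv u z ^ 2 * deriv (deriv u) z / u z) := by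
  have hu₁ : ContDiff ℝ 1 (deriv u) := hu.deriv'
  have hne : ∀ z ∈ Icc (-1 : ℝ) 1, u z ≠ 0 := fun z hz => (hpos z hz).ne'
  have hc : Continuous u := hu.continuous
  have hc₁ : Continuous (deriv u) := hu₁.continuous
  have hn₂ : 0 ≤ n / 2 := by positivity
  have hA : ContinuousOn (fun z => deriv u z ^ 4 / u z ^ 2) (Icc (-1) 1) :=
    (hc₁.pow 4).continuousOn.div (hc.pow 2).continuousOn fun z hz => pow_ne_zero 2 (hne z hz)
  have hB : ContinuousOn (fun z => deriv u z ^ 2 * deriv (deriv u) z / u z) (Icc (-1) 1) := by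
    fun_prop (disch := assumption)
  have hJ : ContinuousOn (fun z => deriv u z ^ 3 / u z) (Icc (-1) 1) := by
    fun_prop (disch := assumption)
  have iA : IntervalIntegrable (fun z => (1 - z ^ 2) ^ (n / 2 + 1) * (deriv u z ^ 4 / u z ^ 2))
      volume (-1) 1 :=
    ((continuous_one_sub_sq_rpow (by positivity)).continuousOn.mul hA).intervalIntegrable_of_Icc
      (by norm_num)
  have iB : IntervalIntegrable
      (fun z => (1 - z ^ 2) ^ (n / 2 + 1) * (deriv u z ^ 2 * deriv (deriv u) z / u z))
      volume (-1) 1 :=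
    ((continuous_one_sub_sq_rpow (by positivity)).continuousOn.mul hB).intervalIntegrable_of_Icc
      (by norm_num)
  have iJ : IntervalIntegrable (fun z => z * (1 - z ^ 2) ^ (n / 2) * (deriv u z ^ 3 / u z))
      volume (-1) 1 :=
    ((continuous_id.mul (continuous_one_sub_sq_rpow hn₂)).continuousOn.mul
      hJ).intervalIntegrable_of_Icc (by norm_num)
  have hibp := integral_one_sub_sq_rpow_mul_deriv hn₂ hJ
    (f' := fun z => 3 * (deriv u z ^ 2 * deriv (deriv u) z / u z) - deriv u z ^ 4 / u z ^ 2)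
    ((continuousOn_const.mul hB).sub hA)
    fun x hx => (hu.differentiable (by norm_num) x).hasDerivAt.pow_three_div
      (hu₁.differentiable one_ne_zero x).hasDerivAt (hne x (Ioo_subset_Icc_self hx))
  simp only [mul_sub, mul_left_comm _ (3 : ℝ)] at hibp
  rw [integral_sub (iB.const_mul 3) iA, intervalIntegral.integral_const_mul] at hibp
  rw [integral_congr (g := fun z => (1 - z ^ 2) ^ (n / 2 + 1) *
      (deriv u z ^ 2 * deriv (deriv u) z / u z) -
        n * (z * (1 - z ^ 2) ^ (n / 2) * (deriv u z ^ 3 / u z))) fun z hz => ?_]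
  · rw [integral_sub iB (iJ.const_mul n), intervalIntegral.integral_const_mul,
      div_mul_eq_mul_div, div_mul_eq_mul_div, ← sub_div, eq_div_iff (by positivity)]
    linear_combination n * hibp
  · rw [uIcc_of_le (by norm_num)] at hz
    have ht : 0 ≤ 1 - z ^ 2 := by nlinarith [hz.1, hz.2]
    beta_reduce
    rw [rpow_add_one' ht (by positivity)]
    ring

theorem stmt_7_general (n : ℝ) (hn : 0 < n) (u : ℝ → ℝ) (hu : ContDiff ℝ 2 u)
    (hpos : ∀ z ∈ Set.Icc (-1 : ℝ) 1, 0 < u z)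
    (ν : Measure ℝ)
    (hν : ν = (volume.restrict (Set.Icc (-1 : ℝ) 1)).withDensity
      (fun z => ENNReal.ofReal
        ((1 - z ^ 2) ^ ((n - 2) / 2) / (Real.sqrt π * Gamma (n / 2) / Gamma ((n + 1) / 2))))) :
    ∫ z, ((1 - z ^ 2) * deriv (deriv u) z - n * z * deriv u z)
          * ((deriv u z) ^ 2 / u z) * (1 - z ^ 2) ∂ν
      = n / (n + 2) * ∫ z, ((deriv u z) ^ 4 / (u z) ^ 2) * (1 - z ^ 2) ^ 2 ∂ν
        - 2 * (n - 1) / (n + 2)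
            * ∫ z, ((deriv u z) ^ 2 * deriv (deriv u) z / u z) * (1 - z ^ 2) ^ 2 ∂ν := by
  set Z := √π * Gamma (n / 2) / Gamma ((n + 1) / 2)
  have hZ : 0 < Z := by positivity
  have hsq : ∀ z ∈ Icc (-1 : ℝ) 1, 0 ≤ 1 - z ^ 2 := fun z hz => by nlinarith [hz.1, hz.2]
  have hweight : ∀ z ∈ Icc (-1 : ℝ) 1, 0 ≤ (1 - z ^ 2) ^ ((n - 2) / 2) / Z := fun z hz =>
    div_nonneg (rpow_nonneg (hsq z hz) _) hZ.le
  have hw₁ (g : ℝ → ℝ) :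
      ∫ z in (-1 : ℝ)..1, (1 - z ^ 2) ^ ((n - 2) / 2) / Z * (g z * (1 - z ^ 2)) =
        (∫ z in (-1 : ℝ)..1, (1 - z ^ 2) ^ (n / 2) * g z) / Z := by
    rw [← intervalIntegral.integral_div]
    refine integral_congr fun z hz => ?_
    rw [uIcc_of_le (by norm_num)] at hz
    rw [show n / 2 = (n - 2) / 2 + 1 by ring, rpow_add_one' (hsq z hz) (by linarith)]
    ring
  have hw₂ (g : ℝ → ℝ) :
      ∫ z in (-1 : ℝ)..1, (1 - z ^ 2) ^ ((n - 2) / 2) / Z * (g z * (1 - z ^ 2) ^ 2) =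
        (∫ z in (-1 : ℝ)..1, (1 - z ^ 2) ^ (n / 2 + 1) * g z) / Z := by
    rw [← intervalIntegral.integral_div]
    refine integral_congr fun z hz => ?_
    rw [uIcc_of_le (by norm_num)] at hz
    rw [show n / 2 + 1 = (n - 2) / 2 + (2 : ℕ) by push_cast; ring,
      rpow_add_natCast' (hsq z hz) (by push_cast; linarith)]
    ring
  subst hν
  simp only [integral_withDensity_ofReal_restrict_Icc (by norm_num) (by fun_prop) hweight]
  rw [hw₁, hw₂, hw₂, integral_one_sub_sq_rpow_mul_generator_mul_deriv_sq_div hn hu hpos]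
  ring

theorem stmt_7 (n : ℝ) (hn : 0 < n) (u : ℝ → ℝ) (hu : ContDiff ℝ 2 u)
    (hpos : ∀ z ∈ Set.Icc (-1 : ℝ) 1, 0 < u z)
    (hbc : deriv u 1 = 0 ∧ deriv u (-1) = 0)
    (ν : Measure ℝ)
    (hν : ν = (volume.restrict (Set.Icc (-1 : ℝ) 1)).withDensity
      (fun z => ENNReal.ofReal
        ((1 - z ^ 2) ^ ((n - 2) / 2) / (Real.sqrt π * Gamma (n / 2) / Gamma ((n + 1) / 2))))) :
    ∫ z, ((1 - z ^ 2) * deriv (deriv u) z - n * z * deriv u z)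
          * ((deriv u z) ^ 2 / u z) * (1 - z ^ 2) ∂ν
      = n / (n + 2) * ∫ z, ((deriv u z) ^ 4 / (u z) ^ 2) * (1 - z ^ 2) ^ 2 ∂ν
        - 2 * (n - 1) / (n + 2)
            * ∫ z, ((deriv u z) ^ 2 * deriv (deriv u) z / u z) * (1 - z ^ 2) ^ 2 ∂ν :=
  stmt_7_general n hn u hu hpos ν hν
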